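/- The noreturn tag certifies that the stack never shrinks: consider an enhanced multi-pushdown system M̂ with N stacks whose global states carry, for each stack j ∈ [N], a tag r_j ∈ {willreturn, noreturn} and whose stack letters carry a tag in {willreturn, noreturn}, and suppose every step of M̂, taken on active stack s with top letter tag a_r before the step (primed components denote values after the step, a'_r the tag of the letter written), satisfies: if the action is a call then (r_s = willreturn implies r'_s = willreturn) and a'_r = r_s; if the action is internal then r'_s = r_s and a'_r = a_r; if the action is a return then r_s = willreturn and r'_s = a_r; and r'_j = r_j for every j ≠ s. Then for every infinite run of M̂, every j ∈ [N] and every position t: if r^t_j = noreturn then |w^{t'}_j| ≥ |w^t_j| for every t' > t. -/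

import Mathlib

attribute [local instance] Classical.propDecidable

/-- Actions modifying a stack with alphabet `Γ`:
`call b` pushes `b`, `ret b` pops the top letter (which must be `b`),
`internal b` replaces the top letter by `b`. -/
inductive MPSAction (Γ : Type*) : Type _
  | call : Γ → MPSAction Γ
  | ret : Γ → MPSAction Γ
  | internal : Γ → MPSAction Γ

/-- The kind of an action. -/
inductive AKind : Type
  | call : AKind
  | ret : AKind
  | internal : AKind
deriving DecidableEq

namespace MPSAction

def kind {Γ : Type*} : MPSAction Γ → AKind
  | .call _ => .call
  | .ret _ => .ret
  | .internal _ => .internal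

def letter {Γ : Type*} : MPSAction Γ → Γ
  | .call b => b
  | .ret b => b
  | .internal b => b

def mapLetter {Γ Γ' : Type*} (f : Γ → Γ') : MPSAction Γ → MPSAction Γ'
  | .call b => .call (f b)
  | .ret b => .ret (f b)
  | .internal b => .internal (f b)

end MPSAction

/-- A multi-pushdown system with `N` stacks, global states `G` and stack alphabet `Γ`:
for each stack `s`, a transition relation `Δ s ⊆ G × Γ × G × 𝔄(Γ)`. -/
structure MPS (G Γ : Type*) (N : ℕ) : Type _ where
  Δ : Fin N → Set (G × Γ × G × MPSAction Γ)

/-- A configuration: a global state together with the contents of the `N` stacks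
(a stack is a list whose head is the top). -/
abbrev MPSConfig (G Γ : Type*) (N : ℕ) := G × (Fin N → List Γ)

/-- One-step relation with respect to the `s`-th stack. -/
def MPS.Step {G Γ : Type*} {N : ℕ} (M : MPS G Γ N) (s : Fin N)
    (c c' : MPSConfig G Γ N) : Prop :=
  ∃ (a : Γ) (rest : List Γ) (act : MPSAction Γ),
    c.2 s = a :: rest ∧
    (c.1, a, c'.1, act) ∈ M.Δ s ∧
    (∀ j : Fin N, j ≠ s → c'.2 j = c.2 j) ∧
    (match act with
      | .ret b => b = a ∧ c'.2 s = rest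
      | .internal b => c'.2 s = b :: rest
      | .call b => c'.2 s = b :: a :: rest)

/-- The standard constraint that the bottom letter `bot` is never pushed, popped,
or replaced by another symbol. -/
def MPS.BotOK {G Γ : Type*} {N : ℕ} (M : MPS G Γ N) (bot : Γ) : Prop :=
  ∀ s : Fin N, ∀ x ∈ M.Δ s,
    (match x.2.2.2 with
      | MPSAction.call b => b ≠ bot
      | MPSAction.ret b => b ≠ bot
      | MPSAction.internal b => (x.2.1 = bot ↔ b = bot))

/-- An infinite sequence of configurations together with the sequence of active stacks. -/
structure MPSTrace (G Γ : Type*) (N : ℕ) : Type _ where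
  conf : ℕ → MPSConfig G Γ N
  stk : ℕ → Fin N

/-- `ρ` is an infinite run of `M`: at each step `t` the active stack is `ρ.stk t`. -/
def MPS.IsRun {G Γ : Type*} {N : ℕ} (M : MPS G Γ N) (ρ : MPSTrace G Γ N) : Prop :=
  ∀ t : ℕ, M.Step (ρ.stk t) (ρ.conf t) (ρ.conf (t + 1))

/-- An enhanced multi-pushdown system: the global states are pairs `(g, s)` and every
transition of `Δ s` starts in a global state whose second component is `s`, so the global
state determines the active stack of the next step. -/
def MPS.Enhanced {G Γ : Type*} {N : ℕ} (M : MPS (G × Fin N) Γ N) : Prop :=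
  ∀ s : Fin N, ∀ x ∈ M.Δ s, x.1.2 = s

namespace MPSTrace

variable {G Γ : Type*} {N : ℕ}

/-- Height of the `j`-th stack at position `t`. -/
def height (ρ : MPSTrace G Γ N) (j : Fin N) (t : ℕ) : ℕ := ((ρ.conf t).2 j).length

/-- The step at position `t` is a call (the active stack grows). -/
def IsCallStep (ρ : MPSTrace G Γ N) (t : ℕ) : Prop :=
  ρ.height (ρ.stk t) (t + 1) = ρ.height (ρ.stk t) t + 1

/-- The step at position `t` is internal (the active stack keeps its height). -/
def IsInternalStep (ρ : MPSTrace G Γ N) (t : ℕ) : Prop :=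
  ρ.height (ρ.stk t) (t + 1) = ρ.height (ρ.stk t) t

/-- The step at position `t` is a return (the active stack shrinks). -/
def IsReturnStep (ρ : MPSTrace G Γ N) (t : ℕ) : Prop :=
  ρ.height (ρ.stk t) (t + 1) + 1 = ρ.height (ρ.stk t) t

/-- `t'` is the abstract successor `Succ^{a,s}(t)`: defined only if `s` is active at `t`;
after a call it is the least later position where `s` is active at the same height,
after an internal action the least later position where `s` is active,
and it is undefined after a return. -/
def IsAbsSucc (ρ : MPSTrace G Γ N) (s : Fin N) (t t' : ℕ) : Prop :=
  ρ.stk t = s ∧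
  ((ρ.IsCallStep t ∧ t < t' ∧ ρ.stk t' = s ∧ ρ.height s t' = ρ.height s t ∧
      ∀ u, t < u → u < t' → ¬(ρ.stk u = s ∧ ρ.height s u = ρ.height s t)) ∨
   (ρ.IsInternalStep t ∧ t < t' ∧ ρ.stk t' = s ∧
      ∀ u, t < u → u < t' → ρ.stk u ≠ s))

/-- `t'` is the caller successor `Succ^{c,s}(t)`: the greatest position `t' < t`
where `s` is active with height one less than the height of `s` at `t`. -/
def IsCallerSucc (ρ : MPSTrace G Γ N) (s : Fin N) (t t' : ℕ) : Prop :=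
  t' < t ∧ ρ.stk t' = s ∧ ρ.height s t' + 1 = ρ.height s t ∧
  ∀ u, t' < u → u < t → ¬(ρ.stk u = s ∧ ρ.height s u + 1 = ρ.height s t)

/-- `k`-bounded runs: there are at most `k - 1` positions where a context switch occurs. -/
def KBounded (ρ : MPSTrace G Γ N) (k : ℕ) : Prop :=
  ∃ f : Fin (k - 1) → ℕ, ∀ t : ℕ, t ∉ Set.range f → ρ.stk t = ρ.stk (t + 1)

/-- `k`-phase-bounded runs: `ℕ` can be partitioned into `α ≤ k` classes such that within
each class all return actions are performed on a single stack. -/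
def KPhaseBounded (ρ : MPSTrace G Γ N) (k : ℕ) : Prop :=
  ∃ (α : ℕ) (c : ℕ → Fin α), α ≤ k ∧
    ∀ b : Fin α, ∃ s : Fin N, ∀ i : ℕ, c i = b → ρ.IsReturnStep i → ρ.stk i = s

/-- `≼`-bounded runs for a total ordering `le` of the stacks: whenever a return is
performed on a stack, every strictly smaller stack contains only bottom letters. -/
def OrderBounded (ρ : MPSTrace G Γ N) (isBot : Γ → Prop)
    (le : Fin N → Fin N → Prop) : Prop :=
  ∀ t : ℕ, ρ.IsReturnStep t → ∀ j : Fin N, le j (ρ.stk t) → j ≠ ρ.stk t →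
    ∀ a ∈ (ρ.conf t).2 j, isBot a

end MPSTrace
/-- Tags recording whether the current call will ever be returned. -/
inductive RTag : Type
  | willreturn : RTag
  | noreturn : RTag
deriving DecidableEq

/-- Tags recording whether a stack is ever active again. -/
inductive DTag : Type
  | alive : DTag
  | dead : DTag
deriving DecidableEq

/-- The hypothesis on transitions of a system whose global states carry a return tag
per stack (extracted by `rof`) and whose stack letters carry a return tag: calls push
the current tag and keep `willreturn`; internal actions keep both tags; returns are
only allowed with tag `willreturn` and restore the tag of the popped letter; tags of
inactive stacks are preserved. -/
def RTagCond {Gs Γ₀ : Type*} {N : ℕ} (M : MPS (Gs × Fin N) (Γ₀ × RTag) N)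
    (rof : Gs → Fin N → RTag) : Prop :=
  ∀ s : Fin N,
    ∀ x ∈ M.Δ s,
      (∀ j : Fin N, j ≠ s → rof x.2.2.1.1 j = rof x.1.1 j) ∧
      (match x.2.2.2 with
        | MPSAction.call b =>
            (rof x.1.1 s = RTag.willreturn → rof x.2.2.1.1 s = RTag.willreturn) ∧
            b.2 = rof x.1.1 s
        | MPSAction.internal b =>
            rof x.2.2.1.1 s = rof x.1.1 s ∧ b.2 = x.2.1.2
        | MPSAction.ret _ =>
            rof x.1.1 s = RTag.willreturn ∧ rof x.2.2.1.1 s = x.2.1.2)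

section ReturnTags

variable {Gs Γ₀ : Type*} {N : ℕ}

/-- Calls push the current tag and returns are only taken under `willreturn`, so a `noreturn`
entry at index `h` of this list is never removed: stack `j` never drops below height `h`. -/
def MPSConfig.returnTags (rof : Gs → Fin N → RTag)
    (c : MPSConfig (Gs × Fin N) (Γ₀ × RTag) N) (j : Fin N) : List RTag :=
  ((c.2 j).reverse.map Prod.snd) ++ [rof c.1.1 j]

theorem MPSConfig.length_returnTags (rof : Gs → Fin N → RTag)
    (c : MPSConfig (Gs × Fin N) (Γ₀ × RTag) N) (j : Fin N) :
    (c.returnTags rof j).length = (c.2 j).length + 1 := by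
  simp [MPSConfig.returnTags]

theorem MPS.Step.returnTags {M : MPS (Gs × Fin N) (Γ₀ × RTag) N}
    {rof : Gs → Fin N → RTag} (hcond : RTagCond M rof) {s : Fin N}
    {c c' : MPSConfig (Gs × Fin N) (Γ₀ × RTag) N} (hstep : M.Step s c c') (j : Fin N) :
    c.returnTags rof j <+: c'.returnTags rof j ∨
      c.returnTags rof j = c'.returnTags rof j ++ [.willreturn] := by
  obtain ⟨a, rest, act, hstk, hΔ, hother, hact⟩ := hstep
  obtain ⟨htag_other, htag_active⟩ := hcond s _ hΔ
  by_cases hjs : j = s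
  · subst hjs
    cases act with
    | call b =>
      obtain ⟨-, hb⟩ := htag_active
      exact .inl ⟨[rof c'.1.1 j], by simp [MPSConfig.returnTags, hstk, hact, hb]⟩
    | internal b =>
      obtain ⟨htag, hb⟩ := htag_active
      exact .inl ⟨[], by simp [MPSConfig.returnTags, hstk, hact, hb, htag]⟩
    | ret b =>
      obtain ⟨hwill, htag⟩ := htag_active
      right
      simp [MPSConfig.returnTags, hstk, hact.2, hwill, htag]
  · exact .inl ⟨[], by simp [MPSConfig.returnTags, hother j hjs, htag_other j hjs]⟩

theorem getElem?_eq_noreturn_of_prefix_or_eq_append_willreturn {l₁ l₂ : List RTag} {h : ℕ}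
    (hl : l₁ <+: l₂ ∨ l₁ = l₂ ++ [.willreturn]) (hh : l₁[h]? = some .noreturn) :
    l₂[h]? = some .noreturn := by
  have hlt : h < l₁.length := (List.getElem?_eq_some_iff.mp hh).1
  rcases hl with ⟨l, rfl⟩ | rfl
  · rwa [List.getElem?_append_left hlt]
  · rcases Nat.lt_or_ge h l₂.length with hlt₂ | hge
    · rwa [List.getElem?_append_left hlt₂] at hh
    · rw [List.length_append, List.length_singleton] at hlt
      rw [List.getElem?_append_right hge, show h - l₂.length = 0 by omega] at hh
      simp at hh

theorem MPS.IsRun.getElem?_returnTags_eq_noreturn {M : MPS (Gs × Fin N) (Γ₀ × RTag) N}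
    {rof : Gs → Fin N → RTag} (hcond : RTagCond M rof)
    {ρ : MPSTrace (Gs × Fin N) (Γ₀ × RTag) N} (hρ : M.IsRun ρ) {j : Fin N} {h t : ℕ}
    (ht : ((ρ.conf t).returnTags rof j)[h]? = some .noreturn) {u : ℕ} (hu : t ≤ u) :
    ((ρ.conf u).returnTags rof j)[h]? = some .noreturn := by
  induction u, hu using Nat.le_induction with
  | base => exact ht
  | succ u _ ih =>
    exact getElem?_eq_noreturn_of_prefix_or_eq_append_willreturn ((hρ u).returnTags hcond j) ih

end ReturnTags

theorem noreturn_tag_no_shrink_general {G₀ Γ₀ : Type*} {N : ℕ}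
    (M : MPS ((G₀ × (Fin N → RTag)) × Fin N) (Γ₀ × RTag) N)
    (hcond : RTagCond M (fun g => g.2))
    (ρ : MPSTrace ((G₀ × (Fin N → RTag)) × Fin N) (Γ₀ × RTag) N) (hρ : M.IsRun ρ)
    (j : Fin N) (t : ℕ) (hr : (ρ.conf t).1.1.2 j = RTag.noreturn) :
    ∀ t' : ℕ, t < t' → ρ.height j t ≤ ρ.height j t' := by
  intro t' ht'
  have htop : ((ρ.conf t).returnTags (fun g => g.2) j)[ρ.height j t]? = some .noreturn := by
    simp [MPSConfig.returnTags, MPSTrace.height, hr]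
  have hlt := (List.getElem?_eq_some_iff.mp
    (hρ.getElem?_returnTags_eq_noreturn hcond htop ht'.le)).1
  rw [MPSConfig.length_returnTags] at hlt
  exact Nat.le_of_lt_succ hlt

/-- The `noreturn` tag certifies that the stack never shrinks: under
the return-tag conditions on every step, along any infinite run, if the tag of stack
`j` is `noreturn` at position `t`, then the height of stack `j` never drops strictly
below its height at `t`. -/
theorem noreturn_tag_no_shrink {G₀ Γ₀ : Type*} [Fintype G₀] [Nonempty G₀] [Fintype Γ₀]
    {N : ℕ} (hN : 1 ≤ N)
    (M : MPS ((G₀ × (Fin N → RTag)) × Fin N) (Γ₀ × RTag) N) (hM : M.Enhanced)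
    (hcond : RTagCond M (fun g => g.2))
    (ρ : MPSTrace ((G₀ × (Fin N → RTag)) × Fin N) (Γ₀ × RTag) N) (hρ : M.IsRun ρ)
    (j : Fin N) (t : ℕ) (hr : (ρ.conf t).1.1.2 j = RTag.noreturn) :
    ∀ t' : ℕ, t < t' → ρ.height j t ≤ ρ.height j t' :=
  noreturn_tag_no_shrink_general M hcond ρ hρ j t hr
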